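/- (Proposition 4.) Let F be a finite field with s elements, u ≥ 3 an integer, φ : F → {0,…,s−1} a fixed bijection, n = s^u, and for 1 ≤ i ≤ u let ξ_i : F^u → F be the i-th coordinate projection; index the n runs by the points x ∈ F^u. Let A be the family of s+1 functions {ξ_1 + μξ_2 : μ ∈ F} ∪ {ξ_2}, and for 1 ≤ v ≤ u−2 let R_v be the family of s² functions {ξ_1 + μξ_2 + νξ_{v+2} : μ ∈ F, ν ∈ F∖{0}} ∪ {ξ_2 + νξ_{v+2} : ν ∈ F∖{0}} ∪ {ξ_{v+2}}, with its s² functions indexed by a common index set: for f = (μ,ν) ∈ F×F∖{0} put r_{v,f} = ξ_1+μξ_2+νξ_{v+2}, for f = (⋆,ν) put r_{v,f} = ξ_2+νξ_{v+2}, and for f = ∞ put r_{v,f} = ξ_{v+2}. For each of the s² indices f and each j = 1,…,u−2 define b_{f,j} : F^u → {0,…,s^{u−2}−1} by b_{f,j}(x) = Σ_{w=1}^{u−2} s^{((u−3−w+j) mod (u−2))} · φ(r_{w,f}(x)), and let B be the n×(u−2)s² matrix whose columns are the b_{f,j} (grouped so that columns (f−1)(u−2)+1,…,f(u−2) are b_{f,1},…,b_{f,u−2}).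 Let D1 be the n×s matrix whose columns are φ composed with s of the s+1 functions of A, let a* be the remaining function of A, let c_k = π_k ∘ φ ∘ a* for permutations π_k of {0,…,s−1} (1 ≤ k ≤ (u−2)s²), and let D2 = (d_1,…,d_{(u−2)s²}) be any LH(s^u,(u−2)s²) with ⌊D2/s⌋ = sB + C where C = (c_1,…,c_{(u−2)s²}). Then (D1,D2) is a doubly coupled design DCD(s^u, s^s, (u−2)s²), D1 is an OA(s^u,s,s,2), and the columns of ⌊D2/s²⌋ = B satisfy: (a) if ⌊(i−1)/(u−2)⌋ = ⌊(i′−1)/(u−2)⌋ and i ≠ i′, then every pair in {0,…,s−1}² occurs exactly s^{u−2} times among the rows of (⌊b_i/s^{u−3}⌋, ⌊b_{i′}/s^{u−3}⌋); and (b) if ⌊(i−1)/(u−2)⌋ ≠ ⌊(i′−1)/(u−2)⌋, then every pair in {0,…,s^{u−2}−1}×{0,…,s−1} occurs exactly s times among the rows of (b_i, ⌊b_{i′}/s^{u−3}⌋), and every pair in {0,…,s−1}×{0,…,s^{u−2}−1} occurs exactly s times among the rows of (⌊b_i/s^{u−3}⌋, b_{i′}). -/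

import Mathlib

namespace P4

lemma helper1 {m a p : ℕ} (hp : p < m) (hpa : p ≤ a) :
    (a - (a - p) % m) % m = p := by
  have h := Nat.mod_add_div (a - p) m
  set mq := m * ((a - p) / m) with hmq
  have hle : (a - p) % m ≤ a - p := Nat.mod_le _ _
  have h2 : a - (a - p) % m = p + mq := by omega
  rw [h2, hmq, Nat.add_mul_mod_self_left, Nat.mod_eq_of_lt hp]

lemma helper2 {m C w : ℕ} (h1 : 1 ≤ w) (h2 : w - 1 < m) (h3 : w ≤ C) :
    (C - 1 - (C - w) % m) % m = w - 1 := by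
  have h := Nat.mod_add_div (C - w) m
  set mq := m * ((C - w) / m) with hmq
  have hle : (C - w) % m ≤ C - w := Nat.mod_le _ _
  have h4 : C - 1 - (C - w) % m = (w - 1) + mq := by omega
  rw [h4, hmq, Nat.add_mul_mod_self_left, Nat.mod_eq_of_lt h2]

lemma digits_lt {s : ℕ} (d : ℕ → ℕ) :
    ∀ m, (∀ p < m, d p < s) → ∑ p ∈ Finset.range m, s ^ p * d p < s ^ m := by
  intro m
  induction m with
  | zero => simp
  | succ m ih =>
    intro hd
    rw [Finset.sum_range_succ, pow_succ]
    have h1 := ih (fun p hp => hd p (by omega))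
    have h2 : d m < s := hd m (by omega)
    have h3 : s ^ m * (d m + 1) ≤ s ^ m * s := Nat.mul_le_mul_left _ h2
    rw [Nat.mul_succ] at h3
    omega

lemma digits_eq {s : ℕ} (hs : 0 < s) :
    ∀ (m : ℕ) (d : ℕ → ℕ), (∀ p < m, d p < s) → ∀ a, a < s ^ m →
      ((∑ p ∈ Finset.range m, s ^ p * d p = a) ↔ (∀ p < m, d p = a / s ^ p % s)) := by
  intro m
  induction m with
  | zero =>
    intro d hd a ha
    simp only [pow_zero, Nat.lt_one_iff] at ha
    simp [ha]
  | succ m ih =>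
    intro d hd a ha
    rw [Finset.sum_range_succ']
    have hrw : ∑ p ∈ Finset.range m, s ^ (p+1) * d (p+1)
        = s * ∑ p ∈ Finset.range m, s ^ p * d (p+1) := by
      rw [Finset.mul_sum]
      exact Finset.sum_congr rfl (fun p _ => by ring)
    rw [hrw, pow_zero, one_mul]
    have hdivlt : a / s < s ^ m := by
      rw [Nat.div_lt_iff_lt_mul hs]
      calc a < s ^ (m+1) := ha
        _ = s ^ m * s := by ring
    have ihs : (∑ p ∈ Finset.range m, s ^ p * d (p+1) = a / s)
        ↔ (∀ p < m, d (p+1) = a / s / s ^ p % s) :=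
      ih (fun p => d (p+1)) (fun p hp => hd (p+1) (by omega)) (a / s) hdivlt
    have hdd : ∀ q : ℕ, a / s / s ^ q = a / s ^ (q+1) := by
      intro q
      rw [Nat.div_div_eq_div_mul]
      congr 1
      ring
    constructor
    · intro h
      have hd0 : d 0 < s := hd 0 (by omega)
      have hmod : a % s = d 0 := by
        rw [← h, add_comm, Nat.add_mul_mod_self_left, Nat.mod_eq_of_lt hd0]
      have hdiv : a / s = ∑ p ∈ Finset.range m, s ^ p * d (p+1) := by
        rw [← h, Nat.mul_add_div hs, Nat.div_eq_of_lt hd0, add_zero]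
      have hall := ihs.mp hdiv.symm
      intro p hp
      match p with
      | 0 => simpa using hmod.symm
      | q + 1 =>
        have h5 := hall q (by omega)
        rw [hdd q] at h5
        exact h5
    · intro h
      have hT : ∑ p ∈ Finset.range m, s ^ p * d (p+1) = a / s := by
        apply ihs.mpr
        intro p hp
        rw [h (p+1) (by omega), hdd p]
      rw [hT]
      have h0 : d 0 = a % s := by simpa using h 0 (by omega)
      rw [h0]
      exact Nat.div_add_mod a s

lemma digits_high {s : ℕ} (hs : 0 < s) (m : ℕ) (hm : 0 < m) (d : ℕ → ℕ)
    (hd : ∀ p < m, d p < s) :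
    (∑ p ∈ Finset.range m, s ^ p * d p) / s ^ (m-1) = d (m-1) := by
  have hlt := digits_lt d m hd
  have hdig := (digits_eq hs m d hd _ hlt).mp rfl (m-1) (by omega)
  have h2 : (∑ p ∈ Finset.range m, s ^ p * d p) / s ^ (m-1) < s := by
    rw [Nat.div_lt_iff_lt_mul (pow_pos hs _)]
    have h3 : s * s ^ (m - 1) = s ^ m := by
      rw [← pow_succ']
      congr 1
      omega
    omega
  rw [Nat.mod_eq_of_lt h2] at hdig
  omega

lemma fiber_count {V β : Type*} [Fintype V] [DecidableEq V] [Fintype β] [DecidableEq β]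
    [AddCommGroup V] [AddCommGroup β]
    (L : V → β) (hadd : ∀ x y, L (x + y) = L x + L y)
    (hsurj : Function.Surjective L) (y : β) :
    (Finset.univ.filter (fun x => L x = y)).card * Fintype.card β = Fintype.card V := by
  have hsub : ∀ x d : V, L (x - d) = L x - L d := by
    intro x d
    have h := hadd (x - d) d
    rw [sub_add_cancel] at h
    rw [h]
    abel
  have key : ∀ y₁ y₂ : β, (Finset.univ.filter (fun x => L x = y₁)).card
      = (Finset.univ.filter (fun x => L x = y₂)).card := by
    intro y₁ y₂
    obtain ⟨d, hd⟩ := hsurj (y₂ - y₁)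
    apply Finset.card_nbij' (i := fun x => x + d) (j := fun x => x - d)
    · intro x hx
      simp only [Finset.mem_coe, Finset.mem_filter, Finset.mem_univ, true_and] at hx ⊢
      rw [hadd, hx, hd]
      abel
    · intro x hx
      simp only [Finset.mem_coe, Finset.mem_filter, Finset.mem_univ, true_and] at hx ⊢
      rw [hsub, hx, hd]
      abel
    · intro x _; simp
    · intro x _; simp
  have total : Fintype.card V
      = ∑ y' ∈ (Finset.univ : Finset β), (Finset.univ.filter (fun x => L x = y')).card := by
    rw [← Finset.card_univ]
    exact Finset.card_eq_sum_card_fiberwise (fun x _ => Finset.mem_univ (L x))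
  rw [total, Finset.sum_congr rfl (fun y' _ => key y' y), Finset.sum_const, smul_eq_mul,
    Finset.card_univ, mul_comm]

lemma count_rows {α : Type*} [Fintype α] [DecidableEq α] (n : ℕ) (rows : ℕ → α)
    (h1 : ∀ x : α, ∃ r, r < n ∧ rows r = x)
    (h2 : ∀ r < n, ∀ r' < n, rows r = rows r' → r = r')
    (P : α → Prop) [DecidablePred P] :
    ((Finset.range n).filter (fun r => P (rows r))).card
      = (Finset.univ.filter P).card := by
  apply Finset.card_nbij (i := rows)
  · intro r hr
    simp only [Finset.mem_coe, Finset.mem_filter, Finset.mem_range] at hr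
    simp [hr.2]
  · intro r hr r' hr' h
    simp only [Finset.coe_filter, Finset.mem_range, Set.mem_setOf_eq] at hr hr'
    exact h2 r hr.1 r' hr'.1 h
  · intro x hx
    simp only [Finset.coe_filter, Finset.mem_univ, true_and, Set.mem_setOf_eq] at hx
    obtain ⟨r, hr, hrx⟩ := h1 x
    refine ⟨r, ?_, hrx⟩
    simp only [Finset.coe_filter, Finset.mem_range, Set.mem_setOf_eq]
    exact ⟨hr, by rw [hrx]; exact hx⟩

def Acoef {F : Type} [Field F] : Option F → F × F
  | some μ => (1, μ)
  | none => (0, 1)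

lemma Adet {F : Type} [Field F] {o o' : Option F} (h : o ≠ o') :
    (Acoef o).1 * (Acoef o').2 - (Acoef o').1 * (Acoef o).2 ≠ 0 := by
  cases o with
  | none => cases o' with
    | none => exact absurd rfl h
    | some μ' => simp [Acoef]
  | some μ => cases o' with
    | none => simp [Acoef]
    | some μ' =>
      simp only [Acoef, one_mul, sub_ne_zero]
      intro hh
      exact h (by rw [hh])

def Rcoef {F : Type} [Field F] : Option (Option F × {y : F // y ≠ 0}) → F × F × F
  | some (some μ, ν) => (1, μ, ν.1)
  | some (none, ν) => (0, 1, ν.1)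
  | none => (0, 0, 1)

lemma Rcoef_nu {F : Type} [Field F] (f : Option (Option F × {y : F // y ≠ 0})) :
    (Rcoef f).2.2 ≠ 0 := by
  match f with
  | some (some μ, ν) => exact ν.2
  | some (none, ν) => exact ν.2
  | none => exact one_ne_zero

lemma Rcoef_inj {F : Type} [Field F] {f f' : Option (Option F × {y : F // y ≠ 0})}
    (h : f ≠ f') :
    (Rcoef f').2.2 * (Rcoef f).1 ≠ (Rcoef f).2.2 * (Rcoef f').1 ∨
    (Rcoef f').2.2 * (Rcoef f).2.1 ≠ (Rcoef f).2.2 * (Rcoef f').2.1 := by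
  match f, f' with
  | none, none => exact absurd rfl h
  | none, some (some μ', ν') => left; simp [Rcoef]
  | none, some (none, ν') => right; simp [Rcoef, ν'.2]
  | some (some μ, ν), none => left; simp [Rcoef, ν.2]
  | some (none, ν), none => right; simp [Rcoef, ν.2]
  | some (some μ, ν), some (none, ν') => left; simp [Rcoef, ν'.2]
  | some (none, ν), some (some μ', ν') =>
    left
    simp only [Rcoef, mul_zero, mul_one]
    exact fun hh => ν.2 hh.symm
  | some (some μ, ν), some (some μ', ν') =>
    by_cases hν : ν.1 = ν'.1
    · right
      simp only [Rcoef, mul_one]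
      have hμ : μ ≠ μ' := by
        intro hμ
        exact h (by rw [hμ, Subtype.ext hν])
      rw [hν]
      intro hh
      exact hμ (mul_left_cancel₀ ν'.2 hh)
    · left
      simp only [Rcoef, mul_one]
      exact fun hh => hν hh.symm
  | some (none, ν), some (none, ν') =>
    by_cases hν : ν.1 = ν'.1
    · exact absurd (by rw [Subtype.ext hν]) h
    · right
      simp only [Rcoef, mul_one]
      exact fun hh => hν hh.symm

def Wf (m J p : ℕ) : ℕ := (m + J - 1 - p) % m + 1
def Ef (m J w : ℕ) : ℕ := (m + J - w) % m

lemma Wf_ge (m J p : ℕ) : 1 ≤ Wf m J p := Nat.le_add_left 1 _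

lemma Wf_le {m : ℕ} (hm : 0 < m) (J p : ℕ) : Wf m J p ≤ m :=
  Nat.succ_le_of_lt (Nat.mod_lt _ hm)

lemma Ef_lt {m : ℕ} (hm : 0 < m) (J w : ℕ) : Ef m J w < m := Nat.mod_lt _ hm

lemma Ef_Wf {m : ℕ} (hm : 0 < m) {J p : ℕ} (hp : p < m) : Ef m J (Wf m J p) = p := by
  unfold Ef Wf
  set X := (m + J - 1 - p) % m with hX
  have hle : X ≤ m + J - 1 - p := Nat.mod_le _ _
  have h1 : m + J - (X + 1) = m + J - 1 - X := by omega
  rw [h1, hX]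
  exact helper1 hp (by omega)

lemma Wf_Ef {m : ℕ} (hm : 0 < m) {J w : ℕ} (h1 : 1 ≤ w) (h2 : w ≤ m) :
    Wf m J (Ef m J w) = w := by
  unfold Wf Ef
  rw [helper2 h1 (by omega) (by omega)]
  omega

lemma Wf_lead {m : ℕ} (hm : 0 < m) {J : ℕ} (hJ : J < m) : Wf m J (m - 1) = J + 1 := by
  unfold Wf
  have h1 : m + J - 1 - (m - 1) = J := by omega
  rw [h1, Nat.mod_eq_of_lt hJ]


lemma build_succ {γ : Type*} (x0 x1 : γ) (g : ℕ → γ) (w : ℕ) (h : 1 ≤ w) :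
    (fun n : ℕ => if n = 0 then x0 else if n = 1 then x1 else g (n - 1)) (w + 1) = g w := by
  simp only []
  rw [if_neg (by omega), if_neg (by omega)]
  simp

lemma count_core {F : Type} [Field F] [Fintype F] [DecidableEq F] {u s n : ℕ}
    (hcard : Fintype.card F = s)
    (rows : ℕ → (Fin u → F))
    (hrows1 : ∀ x : Fin u → F, ∃ r, r < n ∧ rows r = x)
    (hrows2 : ∀ r < n, ∀ r' < n, rows r = rows r' → r = r')
    {β : Type} [Fintype β] [DecidableEq β] [AddCommGroup β]
    (L : (Fin u → F) → β) (hadd : ∀ x y, L (x + y) = L x + L y)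
    (hsurj : Function.Surjective L) (y : β)
    (P : ℕ → Prop) [DecidablePred P]
    (hP : ∀ r < n, (P r ↔ L (rows r) = y))
    (t ex : ℕ) (hβ : Fintype.card β = s ^ t) (hte : ex + t = u) :
    ((Finset.range n).filter P).card = s ^ ex := by
  have hs : 0 < s := by
    have := Fintype.card_pos (α := F)
    omega
  have h1 : (Finset.range n).filter P
      = (Finset.range n).filter (fun r => L (rows r) = y) :=
    Finset.filter_congr (fun r hr => hP r (Finset.mem_range.mp hr))
  rw [h1, count_rows n rows hrows1 hrows2 (fun x => L x = y)]
  have h2 := fiber_count L hadd hsurj y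
  rw [hβ] at h2
  have h3 : Fintype.card (Fin u → F) = s ^ u := by
    rw [Fintype.card_fun, hcard, Fintype.card_fin]
  rw [h3] at h2
  have h4 : s ^ u = s ^ ex * s ^ t := by rw [← pow_add, hte]
  exact Nat.eq_of_mul_eq_mul_right (pow_pos hs t) (by rw [h2, h4])

end P4

/-- An orthogonal array OA(n,m,s,t): an `n × m` array with entries in `{0,…,s-1}`
such that for every choice of `t` distinct columns, every `t`-tuple of levels
occurs exactly `n / s^t` times among the rows. -/
def IsOA (n m s t : ℕ) (D : ℕ → ℕ → ℕ) : Prop :=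
  (∀ r < n, ∀ j < m, D r j < s) ∧
  ∀ f : Fin t → ℕ, (∀ i, f i < m) → Function.Injective f →
    ∀ v : Fin t → ℕ, (∀ i, v i < s) →
      ((Finset.range n).filter (fun r => ∀ i, D r (f i) = v i)).card = n / s ^ t

/-- A Latin hypercube LH(n,m): each column is a permutation of `{0,…,n-1}`. -/
def IsLH (n m : ℕ) (D : ℕ → ℕ → ℕ) : Prop :=
  ∀ j < m, ∀ v < n, ((Finset.range n).filter (fun r => D r j = v)).card = 1

/-- Doubly coupled design conditions (i) and (ii): for every column of `D1` and each
level, the floors `⌊d/s⌋` of each column of `D2` form a permutation of `{0,…,n/s-1}`,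
and for every pair of distinct columns of `D1` and each level combination, the floors
`⌊d/s²⌋` form a permutation of `{0,…,n/s²-1}`. -/
def IsDCD (n s q p : ℕ) (D1 D2 : ℕ → ℕ → ℕ) : Prop :=
  (∀ i < q, ∀ k < p, ∀ a < s, ∀ v < n / s,
    ((Finset.range n).filter (fun r => D1 r i = a ∧ D2 r k / s = v)).card = 1) ∧
  (∀ i < q, ∀ j < q, i ≠ j → ∀ k < p, ∀ a < s, ∀ b < s, ∀ v < n / s ^ 2,
    ((Finset.range n).filter
      (fun r => D1 r i = a ∧ D1 r j = b ∧ D2 r k / s ^ 2 = v)).card = 1)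

set_option maxHeartbeats 1000000 in
/-- Proposition 4: Case 2 of Construction 3 over a finite field `F` with `s` elements.
The runs are the points of `F^u` (enumerated by `rows`), `A` and the `R_v` are the
function families of Lemma 1, the columns of `B` are `b_{f,j}` built from the `R_v` via
the cyclic powers of `s`, `D1` consists of `φ` composed with `s` of the `s+1` functions
of `A`, and `⌊D2/s⌋ = sB + C` with `C` level permutations of the remaining column.
Then `(D1,D2)` is a DCD(s^u, s^s, (u-2)s²), `D1` is an OA(s^u,s,s,2), `⌊D2/s²⌋ = B`,
and the columns of `B` enjoy the stated two-dimensional stratifications. -/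
theorem statement16 (F : Type) [Field F] [Fintype F] [DecidableEq F]
    (s u : ℕ) (hcard : Fintype.card F = s) (hu : 3 ≤ u)
    (phi : F → ℕ) (hphi1 : ∀ a : F, phi a < s) (hphi2 : Function.Injective phi)
    (rows : ℕ → (Fin u → F))
    (hrows1 : ∀ x : Fin u → F, ∃ r, r < s ^ u ∧ rows r = x)
    (hrows2 : ∀ r < s ^ u, ∀ r' < s ^ u, rows r = rows r' → r = r')
    (A : Option F → (Fin u → F) → F)
    (hA1 : ∀ μ : F, A (some μ) = fun x => x ⟨0, by omega⟩ + μ * x ⟨1, by omega⟩)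
    (hA2 : A none = fun x => x ⟨1, by omega⟩)
    (R : ℕ → Option (Option F × {y : F // y ≠ 0}) → (Fin u → F) → F)
    (hR1 : ∀ (v : ℕ) (_ : 1 ≤ v) (_ : v ≤ u - 2) (μ : F) (ν : {y : F // y ≠ 0}),
      R v (some (some μ, ν)) =
        fun x => x ⟨0, by omega⟩ + μ * x ⟨1, by omega⟩ + ν.1 * x ⟨v + 1, by omega⟩)
    (hR2 : ∀ (v : ℕ) (_ : 1 ≤ v) (_ : v ≤ u - 2) (ν : {y : F // y ≠ 0}),
      R v (some (none, ν)) = fun x => x ⟨1, by omega⟩ + ν.1 * x ⟨v + 1, by omega⟩)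
    (hR3 : ∀ (v : ℕ) (_ : 1 ≤ v) (_ : v ≤ u - 2),
      R v none = fun x => x ⟨v + 1, by omega⟩)
    (fidx : ℕ → Option (Option F × {y : F // y ≠ 0}))
    (hfidx : ∀ f < s ^ 2, ∀ f' < s ^ 2, fidx f = fidx f' → f = f')
    (Bmat : ℕ → ℕ → ℕ)
    (hBmat : ∀ r < s ^ u, ∀ k < (u - 2) * s ^ 2,
      Bmat r k = ∑ w ∈ Finset.Icc 1 (u - 2),
        s ^ ((u + (k % (u - 2) + 1) - w - 3) % (u - 2)) *
          phi (R w (fidx (k / (u - 2))) (rows r)))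
    (e : Option F)
    (colsel : ℕ → Option F)
    (hcolsel1 : ∀ c < s, colsel c ≠ e)
    (hcolsel2 : ∀ c < s, ∀ c' < s, colsel c = colsel c' → c = c')
    (D1 : ℕ → ℕ → ℕ)
    (hD1 : ∀ r < s ^ u, ∀ c < s, D1 r c = phi (A (colsel c) (rows r)))
    (pi : ℕ → ℕ → ℕ)
    (hpi : ∀ k < (u - 2) * s ^ 2, ∀ t < s,
      ((Finset.range s).filter (fun a => pi k a = t)).card = 1)
    (D2 : ℕ → ℕ → ℕ) (hLH : IsLH (s ^ u) ((u - 2) * s ^ 2) D2)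
    (hD2 : ∀ r < s ^ u, ∀ k < (u - 2) * s ^ 2,
      D2 r k / s = s * Bmat r k + pi k (phi (A e (rows r)))) :
    IsDCD (s ^ u) s s ((u - 2) * s ^ 2) D1 D2 ∧
    IsOA (s ^ u) s s 2 D1 ∧
    (∀ r < s ^ u, ∀ k < (u - 2) * s ^ 2, D2 r k / s ^ 2 = Bmat r k) ∧
    (∀ i < (u - 2) * s ^ 2, ∀ i' < (u - 2) * s ^ 2, i ≠ i' →
      i / (u - 2) = i' / (u - 2) →
      ∀ a < s, ∀ b < s,
        ((Finset.range (s ^ u)).filter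
          (fun r => Bmat r i / s ^ (u - 3) = a ∧ Bmat r i' / s ^ (u - 3) = b)).card =
          s ^ (u - 2)) ∧
    (∀ i < (u - 2) * s ^ 2, ∀ i' < (u - 2) * s ^ 2,
      i / (u - 2) ≠ i' / (u - 2) →
      (∀ a < s ^ (u - 2), ∀ b < s,
        ((Finset.range (s ^ u)).filter
          (fun r => Bmat r i = a ∧ Bmat r i' / s ^ (u - 3) = b)).card = s) ∧
      (∀ a < s, ∀ b < s ^ (u - 2),
        ((Finset.range (s ^ u)).filter
          (fun r => Bmat r i / s ^ (u - 3) = a ∧ Bmat r i' = b)).card = s)) := by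
  have hs : 0 < s := by have := Fintype.card_pos (α := F); omega
  have hm : 0 < u - 2 := by omega
  -- surjectivity of phi onto range s
  have hphisurj : ∀ b, b < s → ∃ c : F, phi c = b := by
    intro b hb
    have himg : Finset.image phi Finset.univ = Finset.range s := by
      apply Finset.eq_of_subset_of_card_le
      · intro x hx
        simp only [Finset.mem_image, Finset.mem_univ, true_and] at hx
        obtain ⟨c, hc⟩ := hx
        rw [← hc]
        exact Finset.mem_range.mpr (hphi1 c)
      · rw [Finset.card_range, Finset.card_image_of_injective _ hphi2,
          Finset.card_univ, hcard]
    have hmem : b ∈ Finset.image phi Finset.univ := by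
      rw [himg]; exact Finset.mem_range.mpr hb
    simpa using hmem
  obtain ⟨psi, hpsi⟩ : ∃ ψ : ℕ → F, ∀ b, b < s → phi (ψ b) = b := by
    refine ⟨fun b => if h : ∃ c : F, phi c = b then h.choose else 1, fun b hb => ?_⟩
    have h := hphisurj b hb
    simp only [dif_pos h]
    exact h.choose_spec
  have hphiiff : ∀ (c : F) (b : ℕ), b < s → (phi c = b ↔ c = psi b) := by
    intro c b hb
    constructor
    · intro h; apply hphi2; rw [hpsi b hb, h]
    · intro h; rw [h, hpsi b hb]
  -- normal forms
  have hAform : ∀ (o : Option F) (x : Fin u → F),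
      A o x = (P4.Acoef o).1 * x ⟨0, by omega⟩ + (P4.Acoef o).2 * x ⟨1, by omega⟩ := by
    intro o x
    cases o with
    | none => rw [hA2]; simp [P4.Acoef]
    | some μ => rw [hA1]; simp [P4.Acoef]
  have hRform : ∀ (w : ℕ) (h1 : 1 ≤ w) (h2 : w ≤ u - 2), ∀ f (x : Fin u → F),
      R w f x = (P4.Rcoef f).1 * x ⟨0, by omega⟩ + (P4.Rcoef f).2.1 * x ⟨1, by omega⟩
        + (P4.Rcoef f).2.2 * x ⟨w + 1, by omega⟩ := by
    intro w h1 h2 f x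
    match f with
    | none => rw [hR3 w h1 h2]; simp [P4.Rcoef]
    | some (none, ν) => rw [hR2 w h1 h2 ν]; simp [P4.Rcoef]
    | some (some μ, ν) => rw [hR1 w h1 h2 μ ν]; simp [P4.Rcoef]
  have hAadd : ∀ (o : Option F) (x y : Fin u → F), A o (x + y) = A o x + A o y := by
    intro o x y
    rw [hAform, hAform, hAform]
    simp only [Pi.add_apply]
    ring
  have hRadd : ∀ (w : ℕ), 1 ≤ w → w ≤ u - 2 → ∀ f (x y : Fin u → F),
      R w f (x + y) = R w f x + R w f y := by
    intro w h1 h2 f x y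
    rw [hRform w h1 h2, hRform w h1 h2, hRform w h1 h2]
    simp only [Pi.add_apply]
    ring
  -- linear solving for two A functionals
  have hsolveA : ∀ (o o' : Option F), o ≠ o' → ∀ y1 y2 : F, ∃ x0 x1 : F,
      (P4.Acoef o).1 * x0 + (P4.Acoef o).2 * x1 = y1 ∧
      (P4.Acoef o').1 * x0 + (P4.Acoef o').2 * x1 = y2 := by
    intro o o' hne y1 y2
    have hdet := P4.Adet hne
    refine ⟨((P4.Acoef o').2 * y1 - (P4.Acoef o).2 * y2)
        / ((P4.Acoef o).1 * (P4.Acoef o').2 - (P4.Acoef o').1 * (P4.Acoef o).2),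
      ((P4.Acoef o).1 * y2 - (P4.Acoef o').1 * y1)
        / ((P4.Acoef o).1 * (P4.Acoef o').2 - (P4.Acoef o').1 * (P4.Acoef o).2), ?_, ?_⟩
    · rw [mul_div_assoc', mul_div_assoc', ← add_div, div_eq_iff hdet]
      ring
    · rw [mul_div_assoc', mul_div_assoc', ← add_div, div_eq_iff hdet]
      ring
  -- pi k maps range s into range s
  have hpilt : ∀ k, k < (u-2)*s^2 → ∀ a, a < s → pi k a < s := by
    intro k hk a ha
    have hdisj : ∀ t1 ∈ Finset.range s, ∀ t2 ∈ Finset.range s, t1 ≠ t2 →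
        Disjoint ((Finset.range s).filter (fun b => pi k b = t1))
          ((Finset.range s).filter (fun b => pi k b = t2)) := by
      intro t1 _ t2 _ htt
      rw [Finset.disjoint_left]
      intro b hb hb'
      simp only [Finset.mem_filter] at hb hb'
      exact htt (by rw [← hb.2, hb'.2])
    have hbi : (Finset.range s).biUnion
        (fun t => (Finset.range s).filter (fun b => pi k b = t))
        = (Finset.range s).filter (fun b => pi k b < s) := by
      ext b
      simp only [Finset.mem_biUnion, Finset.mem_filter, Finset.mem_range]
      constructor
      · rintro ⟨t, ht, hb, hbt⟩
        exact ⟨hb, by omega⟩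
      · rintro ⟨hb, hlt⟩
        exact ⟨pi k b, hlt, hb, rfl⟩
    have hsum : ∑ t ∈ Finset.range s,
        ((Finset.range s).filter (fun b => pi k b = t)).card = s := by
      rw [Finset.sum_congr rfl (fun t ht => hpi k hk t (Finset.mem_range.mp ht))]
      simp
    have hU : (Finset.range s).filter (fun b => pi k b < s) = Finset.range s := by
      apply Finset.eq_of_subset_of_card_le (Finset.filter_subset _ _)
      rw [← hbi, Finset.card_biUnion hdisj, hsum, Finset.card_range]
    have hmem : a ∈ (Finset.range s).filter (fun b => pi k b < s) := by
      rw [hU]; exact Finset.mem_range.mpr ha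
    exact (Finset.mem_filter.mp hmem).2
  -- D2 / s^2 = Bmat
  have hDB : ∀ r < s ^ u, ∀ k < (u - 2) * s ^ 2, D2 r k / s ^ 2 = Bmat r k := by
    intro r hr k hk
    have hplt : pi k (phi (A e (rows r))) < s := hpilt k hk _ (hphi1 _)
    have h1 : D2 r k / s ^ 2 = D2 r k / s / s := by
      rw [Nat.div_div_eq_div_mul, pow_two]
    rw [h1, hD2 r hr k hk, Nat.mul_add_div hs, Nat.div_eq_of_lt hplt, add_zero]
  -- B value as base-s digits
  have hBval : ∀ r, r < s ^ u → ∀ k, k < (u-2) * s^2 → Bmat r k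
      = ∑ p ∈ Finset.range (u-2),
          s ^ p * phi (R (P4.Wf (u-2) (k % (u-2)) p) (fidx (k / (u-2))) (rows r)) := by
    intro r hr k hk
    rw [hBmat r hr k hk]
    refine Finset.sum_nbij' (i := fun w => P4.Ef (u-2) (k % (u-2)) w)
      (j := fun p => P4.Wf (u-2) (k % (u-2)) p) ?_ ?_ ?_ ?_ ?_
    · intro w hw
      exact Finset.mem_range.mpr (P4.Ef_lt hm _ _)
    · intro p hp
      exact Finset.mem_Icc.mpr ⟨P4.Wf_ge _ _ _, P4.Wf_le hm _ _⟩
    · intro w hw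
      rw [Finset.mem_Icc] at hw
      exact P4.Wf_Ef hm hw.1 hw.2
    · intro p hp
      exact P4.Ef_Wf hm (Finset.mem_range.mp hp)
    · intro w hw
      rw [Finset.mem_Icc] at hw
      rw [P4.Wf_Ef hm hw.1 hw.2]
      have hexp : u + (k % (u - 2) + 1) - w - 3 = (u-2) + k % (u-2) - w := by omega
      rw [hexp]
      rfl
  have hBlt : ∀ r, r < s ^ u → ∀ k, k < (u-2) * s^2 → Bmat r k < s ^ (u - 2) := by
    intro r hr k hk
    rw [hBval r hr k hk]
    exact P4.digits_lt _ _ (fun p hp => hphi1 _)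
  have hBiff : ∀ r, r < s ^ u → ∀ k, k < (u-2) * s^2 → ∀ v, v < s ^ (u-2) →
      (Bmat r k = v ↔ ∀ p : Fin (u - 2),
        R (P4.Wf (u-2) (k % (u-2)) p.1) (fidx (k / (u-2))) (rows r)
          = psi (v / s ^ p.1 % s)) := by
    intro r hr k hk v hv
    rw [hBval r hr k hk, P4.digits_eq hs (u-2) _ (fun p hp => hphi1 _) v hv]
    constructor
    · intro h p
      exact (hphiiff _ _ (Nat.mod_lt _ hs)).mp (h p.1 p.2)
    · intro h p hp
      exact (hphiiff _ _ (Nat.mod_lt _ hs)).mpr (h ⟨p, hp⟩)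
  have hBlead : ∀ r, r < s ^ u → ∀ k, k < (u-2) * s^2 → ∀ a, a < s →
      (Bmat r k / s ^ (u - 3) = a ↔
        R (k % (u-2) + 1) (fidx (k / (u-2))) (rows r) = psi a) := by
    intro r hr k hk a ha
    have h1 : u - 3 = (u - 2) - 1 := by omega
    rw [hBval r hr k hk, h1,
      P4.digits_high hs (u-2) hm _ (fun p hp => hphi1 _),
      P4.Wf_lead hm (Nat.mod_lt _ hm)]
    exact hphiiff _ _ ha
  -- surjectivity: two A functionals
  have hsurjOA : ∀ (o o' : Option F), o ≠ o' →
      Function.Surjective (fun x : Fin u → F => (A o x, A o' x)) := by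
    intro o o' hne
    rintro ⟨y1, y2⟩
    obtain ⟨x0, x1, h1, h2⟩ := hsolveA o o' hne y1 y2
    obtain ⟨X, hX0, hX1⟩ : ∃ X : Fin u → F, X ⟨0, by omega⟩ = x0 ∧ X ⟨1, by omega⟩ = x1 :=
      ⟨fun idx => if idx.1 = 0 then x0 else if idx.1 = 1 then x1 else 0, rfl, rfl⟩
    refine ⟨X, ?_⟩
    show (A o X, A o' X) = (y1, y2)
    rw [hAform o X, hAform o' X, hX0, hX1, h1, h2]
  -- surjectivity: two A functionals plus the R block
  have hsurjM2 : ∀ (o o' : Option F), o ≠ o' → ∀ f (J : ℕ),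
      Function.Surjective (fun x : Fin u → F =>
        (A o x, A o' x, fun p : Fin (u - 2) => R (P4.Wf (u-2) J p.1) f x)) := by
    intro o o' hne f J
    rintro ⟨y1, y2, t⟩
    obtain ⟨x0, x1, h1, h2⟩ := hsolveA o o' hne y1 y2
    obtain ⟨α, β, ν, hco⟩ : ∃ α β ν : F, P4.Rcoef f = (α, β, ν) := ⟨_, _, _, rfl⟩
    have hco1 : (P4.Rcoef f).1 = α := by rw [hco]
    have hco2 : (P4.Rcoef f).2.1 = β := by rw [hco]
    have hco3 : (P4.Rcoef f).2.2 = ν := by rw [hco]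
    have hν : ν ≠ 0 := by
      have h := P4.Rcoef_nu f
      rw [hco3] at h
      exact h
    obtain ⟨X, hX0, hX1, hXw⟩ : ∃ X : Fin u → F, X ⟨0, by omega⟩ = x0 ∧
        X ⟨1, by omega⟩ = x1 ∧
        ∀ (w : ℕ) (hw1 : 1 ≤ w) (hwu : w + 1 < u),
          X ⟨w + 1, hwu⟩ = ν⁻¹ * (t ⟨P4.Ef (u-2) J w, P4.Ef_lt hm J w⟩ - α * x0 - β * x1) := by
      refine ⟨fun idx : Fin u => (fun n : ℕ => if n = 0 then x0 else if n = 1 then x1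
        else (fun w : ℕ => ν⁻¹ * (t ⟨P4.Ef (u-2) J w, P4.Ef_lt hm J w⟩ - α * x0 - β * x1)) (n - 1)) idx.1,
        rfl, rfl, ?_⟩
      intro w hw1 hwu
      exact P4.build_succ x0 x1
        (fun w : ℕ => ν⁻¹ * (t ⟨P4.Ef (u-2) J w, P4.Ef_lt hm J w⟩ - α * x0 - β * x1)) w hw1
    refine ⟨X, ?_⟩
    show (A o X, A o' X, fun p : Fin (u - 2) => R (P4.Wf (u-2) J p.1) f X) = (y1, y2, t)
    simp only [Prod.mk.injEq]
    refine ⟨?_, ?_, ?_⟩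
    · rw [hAform o X, hX0, hX1]
      exact h1
    · rw [hAform o' X, hX0, hX1]
      exact h2
    · funext p
      rw [hRform (P4.Wf (u-2) J p.1) (P4.Wf_ge _ _ _) (P4.Wf_le hm _ _) f X, hco1, hco2, hco3, hX0, hX1]
      rw [hXw (P4.Wf (u-2) J p.1) (P4.Wf_ge _ _ _)
        (by have := P4.Wf_le hm J p.1; omega)]
      have hidx : (⟨P4.Ef (u-2) J (P4.Wf (u-2) J p.1),
          P4.Ef_lt hm J (P4.Wf (u-2) J p.1)⟩ : Fin (u-2)) = p :=
        Fin.ext (P4.Ef_Wf hm p.2)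
      rw [hidx, mul_inv_cancel_left₀ hν]
      ring
  -- surjectivity: R block for f plus one R functional for f' ≠ f
  have hsurjM5 : ∀ f f', f ≠ f' → ∀ (J ws : ℕ), 1 ≤ ws → ws ≤ u - 2 →
      Function.Surjective (fun x : Fin u → F =>
        ((fun p : Fin (u - 2) => R (P4.Wf (u-2) J p.1) f x), R ws f' x)) := by
    intro f f' hnef J ws hws1 hws2
    rintro ⟨t, y2⟩
    obtain ⟨α, β, ν, hco⟩ : ∃ α β ν : F, P4.Rcoef f = (α, β, ν) := ⟨_, _, _, rfl⟩
    obtain ⟨α', β', ν', hco'⟩ : ∃ a b c : F, P4.Rcoef f' = (a, b, c) := ⟨_, _, _, rfl⟩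
    have hco1 : (P4.Rcoef f).1 = α := by rw [hco]
    have hco2 : (P4.Rcoef f).2.1 = β := by rw [hco]
    have hco3 : (P4.Rcoef f).2.2 = ν := by rw [hco]
    have hν : ν ≠ 0 := by
      have h := P4.Rcoef_nu f
      rw [hco3] at h
      exact h
    have hco'1 : (P4.Rcoef f').1 = α' := by rw [hco']
    have hco'2 : (P4.Rcoef f').2.1 = β' := by rw [hco']
    have hco'3 : (P4.Rcoef f').2.2 = ν' := by rw [hco']
    have hν' : ν' ≠ 0 := by
      have h := P4.Rcoef_nu f'
      rw [hco'3] at h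
      exact h
    have hAB : ν * α' - ν' * α ≠ 0 ∨ ν * β' - ν' * β ≠ 0 := by
      have h := P4.Rcoef_inj hnef
      rw [hco1, hco2, hco3, hco'1, hco'2, hco'3] at h
      rcases h with h | h
      · left; exact sub_ne_zero.mpr (Ne.symm h)
      · right; exact sub_ne_zero.mpr (Ne.symm h)
    obtain ⟨x0, x1, hx01⟩ : ∃ x0 x1 : F,
        (ν * α' - ν' * α) * x0 + (ν * β' - ν' * β) * x1
          = ν * y2 - ν' * t ⟨P4.Ef (u-2) J ws, P4.Ef_lt hm J ws⟩ := by
      rcases hAB with h | h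
      · exact ⟨(ν * α' - ν' * α)⁻¹ * (ν * y2 - ν' * t ⟨P4.Ef (u-2) J ws, P4.Ef_lt hm J ws⟩),
          0, by field_simp; ring⟩
      · exact ⟨0, (ν * β' - ν' * β)⁻¹ * (ν * y2 - ν' * t ⟨P4.Ef (u-2) J ws, P4.Ef_lt hm J ws⟩),
          by field_simp; ring⟩
    obtain ⟨X, hX0, hX1, hXw⟩ : ∃ X : Fin u → F, X ⟨0, by omega⟩ = x0 ∧
        X ⟨1, by omega⟩ = x1 ∧
        ∀ (w : ℕ) (hw1 : 1 ≤ w) (hwu : w + 1 < u),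
          X ⟨w + 1, hwu⟩ = ν⁻¹ * (t ⟨P4.Ef (u-2) J w, P4.Ef_lt hm J w⟩ - α * x0 - β * x1) := by
      refine ⟨fun idx : Fin u => (fun n : ℕ => if n = 0 then x0 else if n = 1 then x1
        else (fun w : ℕ => ν⁻¹ * (t ⟨P4.Ef (u-2) J w, P4.Ef_lt hm J w⟩ - α * x0 - β * x1)) (n - 1)) idx.1,
        rfl, rfl, ?_⟩
      intro w hw1 hwu
      exact P4.build_succ x0 x1
        (fun w : ℕ => ν⁻¹ * (t ⟨P4.Ef (u-2) J w, P4.Ef_lt hm J w⟩ - α * x0 - β * x1)) w hw1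
    refine ⟨X, ?_⟩
    show ((fun p : Fin (u - 2) => R (P4.Wf (u-2) J p.1) f X), R ws f' X) = (t, y2)
    simp only [Prod.mk.injEq]
    constructor
    · funext p
      rw [hRform (P4.Wf (u-2) J p.1) (P4.Wf_ge _ _ _) (P4.Wf_le hm _ _) f X, hco1, hco2, hco3, hX0, hX1]
      rw [hXw (P4.Wf (u-2) J p.1) (P4.Wf_ge _ _ _)
        (by have := P4.Wf_le hm J p.1; omega)]
      have hidx : (⟨P4.Ef (u-2) J (P4.Wf (u-2) J p.1),
          P4.Ef_lt hm J (P4.Wf (u-2) J p.1)⟩ : Fin (u-2)) = p :=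
        Fin.ext (P4.Ef_Wf hm p.2)
      rw [hidx, mul_inv_cancel_left₀ hν]
      ring
    · rw [hRform ws hws1 hws2 f' X, hco'1, hco'2, hco'3, hX0, hX1, hXw ws hws1 (by omega)]
      field_simp
      linear_combination hx01
  -- surjectivity: two R functionals of the same family
  have hsurjM4 : ∀ f (w1 w2 : ℕ), 1 ≤ w1 → w1 ≤ u - 2 → 1 ≤ w2 → w2 ≤ u - 2 → w1 ≠ w2 →
      Function.Surjective (fun x : Fin u → F => (R w1 f x, R w2 f x)) := by
    intro f w1 w2 h11 h12 h21 h22 hne12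
    rintro ⟨y1, y2⟩
    obtain ⟨α, β, ν, hco⟩ : ∃ α β ν : F, P4.Rcoef f = (α, β, ν) := ⟨_, _, _, rfl⟩
    have hco1 : (P4.Rcoef f).1 = α := by rw [hco]
    have hco2 : (P4.Rcoef f).2.1 = β := by rw [hco]
    have hco3 : (P4.Rcoef f).2.2 = ν := by rw [hco]
    have hν : ν ≠ 0 := by
      have h := P4.Rcoef_nu f
      rw [hco3] at h
      exact h
    have e0 : ∀ n : ℕ, n ≠ w1 + 1 → n ≠ w2 + 1 →
        (fun n : ℕ => if n = w1 + 1 then ν⁻¹ * y1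
          else if n = w2 + 1 then ν⁻¹ * y2 else 0) n = 0 := by
      intro n hn1 hn2
      show (if n = w1 + 1 then ν⁻¹ * y1 else if n = w2 + 1 then ν⁻¹ * y2 else 0) = 0
      rw [if_neg hn1, if_neg hn2]
    have ew1 : (fun n : ℕ => if n = w1 + 1 then ν⁻¹ * y1
        else if n = w2 + 1 then ν⁻¹ * y2 else 0) (w1 + 1) = ν⁻¹ * y1 := by
      show (if w1 + 1 = w1 + 1 then ν⁻¹ * y1 else if w1 + 1 = w2 + 1 then ν⁻¹ * y2 else 0)
        = ν⁻¹ * y1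
      rw [if_pos rfl]
    have ew2 : (fun n : ℕ => if n = w1 + 1 then ν⁻¹ * y1
        else if n = w2 + 1 then ν⁻¹ * y2 else 0) (w2 + 1) = ν⁻¹ * y2 := by
      show (if w2 + 1 = w1 + 1 then ν⁻¹ * y1 else if w2 + 1 = w2 + 1 then ν⁻¹ * y2 else 0)
        = ν⁻¹ * y2
      rw [if_neg (by omega), if_pos rfl]
    obtain ⟨X, hX0, hX1, hXw1, hXw2⟩ : ∃ X : Fin u → F, X ⟨0, by omega⟩ = 0 ∧
        X ⟨1, by omega⟩ = 0 ∧ X ⟨w1 + 1, by omega⟩ = ν⁻¹ * y1 ∧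
        X ⟨w2 + 1, by omega⟩ = ν⁻¹ * y2 := by
      refine ⟨fun idx : Fin u => (fun n : ℕ => if n = w1 + 1 then ν⁻¹ * y1
        else if n = w2 + 1 then ν⁻¹ * y2 else 0) idx.1, ?_, ?_, ?_, ?_⟩
      · exact e0 0 (by omega) (by omega)
      · exact e0 1 (by omega) (by omega)
      · exact ew1
      · exact ew2
    refine ⟨X, ?_⟩
    show (R w1 f X, R w2 f X) = (y1, y2)
    rw [hRform w1 h11 h12 f X, hRform w2 h21 h22 f X, hco1, hco2, hco3, hX0, hX1,
      hXw1, hXw2, mul_inv_cancel_left₀ hν, mul_inv_cancel_left₀ hν]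
    simp
  have hdiv1 : s ^ u / s = s ^ (u - 1) := by
    have h := Nat.pow_div (show 1 ≤ u by omega) hs
    rwa [pow_one] at h
  have hdiv2 : s ^ u / s ^ 2 = s ^ (u - 2) := Nat.pow_div (by omega) hs
  have hcard3 : Fintype.card (F × F × (Fin (u - 2) → F)) = s ^ u := by
    rw [Fintype.card_prod, Fintype.card_prod, Fintype.card_fun, hcard, Fintype.card_fin]
    have h : u = 2 + (u - 2) := by omega
    conv_rhs => rw [h]
    rw [pow_add, pow_two]
    ring
  have hcard2 : Fintype.card (F × F) = s ^ 2 := by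
    rw [Fintype.card_prod, hcard, pow_two]
  have hcardm1 : Fintype.card ((Fin (u - 2) → F) × F) = s ^ (u - 1) := by
    rw [Fintype.card_prod, Fintype.card_fun, hcard, Fintype.card_fin, ← pow_succ]
    congr 1
    omega
  refine ⟨⟨?_, ?_⟩, ⟨?_, ?_⟩, hDB, ?_, ?_⟩
  · -- DCD condition (i)
    intro i hi k hk a ha v hv
    rw [hdiv1] at hv
    have hvB : v / s < s ^ (u - 2) := by
      rw [Nat.div_lt_iff_lt_mul hs]
      have h : s ^ (u - 2) * s = s ^ (u - 1) := by
        rw [← pow_succ]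
        congr 1
        omega
      omega
    obtain ⟨a0, ha0s, ha0, ha0u⟩ : ∃ a0, a0 < s ∧ pi k a0 = v % s ∧
        ∀ b, b < s → pi k b = v % s → b = a0 := by
      obtain ⟨a0, hset⟩ := Finset.card_eq_one.mp (hpi k hk (v % s) (Nat.mod_lt _ hs))
      have hmem : a0 ∈ (Finset.range s).filter (fun b => pi k b = v % s) := by
        rw [hset]
        exact Finset.mem_singleton_self a0
      simp only [Finset.mem_filter, Finset.mem_range] at hmem
      refine ⟨a0, hmem.1, hmem.2, fun b hb hbe => ?_⟩
      have hbmem : b ∈ (Finset.range s).filter (fun b => pi k b = v % s) := by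
        simp only [Finset.mem_filter, Finset.mem_range]
        exact ⟨hb, hbe⟩
      rw [hset] at hbmem
      exact Finset.mem_singleton.mp hbmem
    have hne : colsel i ≠ e := hcolsel1 i hi
    have hres := P4.count_core hcard rows hrows1 hrows2
      (fun x : Fin u → F => (A (colsel i) x, A e x,
        fun p : Fin (u - 2) => R (P4.Wf (u-2) (k % (u-2)) p.1) (fidx (k / (u-2))) x))
      (by
        intro x y
        simp only [Prod.mk_add_mk, Prod.mk.injEq]
        exact ⟨hAadd _ _ _, hAadd _ _ _, funext fun p => by
          rw [Pi.add_apply]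
          exact hRadd _ (P4.Wf_ge _ _ _) (P4.Wf_le hm _ _) _ _ _⟩)
      (hsurjM2 (colsel i) e hne (fidx (k / (u-2))) (k % (u-2)))
      (psi a, psi a0, fun p : Fin (u - 2) => psi (v / s / s ^ p.1 % s))
      (fun r => D1 r i = a ∧ D2 r k / s = v)
      (by
        intro r hr
        beta_reduce
        rw [hD1 r hr i hi, hD2 r hr k hk]
        have hc : pi k (phi (A e (rows r))) < s := hpilt k hk _ (hphi1 _)
        have hsplit : (s * Bmat r k + pi k (phi (A e (rows r))) = v)
            ↔ (Bmat r k = v / s ∧ pi k (phi (A e (rows r))) = v % s) := by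
          constructor
          · intro h
            constructor
            · rw [← h, Nat.mul_add_div hs, Nat.div_eq_of_lt hc, add_zero]
            · rw [← h, add_comm, Nat.add_mul_mod_self_left, Nat.mod_eq_of_lt hc]
          · rintro ⟨hh1, hh2⟩
            rw [hh1, hh2]
            exact Nat.div_add_mod v s
        rw [hsplit, hBiff r hr k hk (v / s) hvB, hphiiff _ a ha]
        have hpil : (pi k (phi (A e (rows r))) = v % s) ↔ A e (rows r) = psi a0 := by
          rw [← hphiiff _ a0 ha0s]
          exact ⟨fun h => ha0u _ (hphi1 _) h, fun h => by rw [h, ha0]⟩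
        rw [hpil]
        simp only [Prod.mk.injEq, funext_iff]
        try tauto)
      u 0 hcard3 (by omega)
    simpa using hres
  · -- DCD condition (ii)
    intro i hi j hj hij k hk a ha b hb v hv
    rw [hdiv2] at hv
    have hnec : colsel i ≠ colsel j := fun h => hij (hcolsel2 _ hi _ hj h)
    have hres := P4.count_core hcard rows hrows1 hrows2
      (fun x : Fin u → F => (A (colsel i) x, A (colsel j) x,
        fun p : Fin (u - 2) => R (P4.Wf (u-2) (k % (u-2)) p.1) (fidx (k / (u-2))) x))
      (by
        intro x y
        simp only [Prod.mk_add_mk, Prod.mk.injEq]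
        exact ⟨hAadd _ _ _, hAadd _ _ _, funext fun p => by
          rw [Pi.add_apply]
          exact hRadd _ (P4.Wf_ge _ _ _) (P4.Wf_le hm _ _) _ _ _⟩)
      (hsurjM2 (colsel i) (colsel j) hnec (fidx (k / (u-2))) (k % (u-2)))
      (psi a, psi b, fun p : Fin (u - 2) => psi (v / s ^ p.1 % s))
      (fun r => D1 r i = a ∧ D1 r j = b ∧ D2 r k / s ^ 2 = v)
      (by
        intro r hr
        beta_reduce
        rw [hD1 r hr i hi, hD1 r hr j hj, hDB r hr k hk,
          hBiff r hr k hk v hv, hphiiff _ a ha, hphiiff _ b hb]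
        simp only [Prod.mk.injEq, funext_iff]
        try tauto)
      u 0 hcard3 (by omega)
    simpa using hres
  · -- OA bounds
    intro r hr j hj
    rw [hD1 r hr j hj]
    exact hphi1 _
  · -- OA pair counts
    intro fsel hfs hfinj v hvlt
    have hne01 : fsel 0 ≠ fsel 1 := by
      intro h
      have h01 := hfinj h
      exact absurd h01 (by decide)
    have hnec : colsel (fsel 0) ≠ colsel (fsel 1) :=
      fun h => hne01 (hcolsel2 _ (hfs 0) _ (hfs 1) h)
    rw [hdiv2]
    have hres := P4.count_core hcard rows hrows1 hrows2
      (fun x : Fin u → F => (A (colsel (fsel 0)) x, A (colsel (fsel 1)) x))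
      (by
        intro x y
        simp only [Prod.mk_add_mk, Prod.mk.injEq]
        exact ⟨hAadd _ _ _, hAadd _ _ _⟩)
      (hsurjOA _ _ hnec)
      (psi (v 0), psi (v 1))
      (fun r => ∀ i2, D1 r (fsel i2) = v i2)
      (by
        intro r hr
        beta_reduce
        rw [Fin.forall_fin_two, hD1 r hr _ (hfs 0), hD1 r hr _ (hfs 1),
          hphiiff _ _ (hvlt 0), hphiiff _ _ (hvlt 1)]
        simp only [Prod.mk.injEq])
      2 (u - 2) hcard2 (by omega)
    exact hres
  · -- claim (a)
    intro i hi i' hi' hii hdivq a ha b hb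
    have hmodne : i % (u - 2) ≠ i' % (u - 2) := by
      have h1 := Nat.div_add_mod i (u - 2)
      have h2 := Nat.div_add_mod i' (u - 2)
      rw [hdivq] at h1
      set Q := (u - 2) * (i' / (u - 2)) with hQ
      omega
    have hble1 : i % (u - 2) < u - 2 := Nat.mod_lt _ hm
    have hble2 : i' % (u - 2) < u - 2 := Nat.mod_lt _ hm
    have hres := P4.count_core hcard rows hrows1 hrows2
      (fun x : Fin u → F => (R (i % (u - 2) + 1) (fidx (i / (u - 2))) x,
        R (i' % (u - 2) + 1) (fidx (i / (u - 2))) x))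
      (by
        intro x y
        simp only [Prod.mk_add_mk, Prod.mk.injEq]
        exact ⟨hRadd _ (by omega) (by omega) _ _ _, hRadd _ (by omega) (by omega) _ _ _⟩)
      (hsurjM4 _ _ _ (by omega) (by omega) (by omega) (by omega) (by omega))
      (psi a, psi b)
      (fun r => Bmat r i / s ^ (u - 3) = a ∧ Bmat r i' / s ^ (u - 3) = b)
      (by
        intro r hr
        beta_reduce
        rw [hBlead r hr i hi a ha, hBlead r hr i' hi' b hb, ← hdivq]
        simp only [Prod.mk.injEq])
      2 (u - 2) hcard2 (by omega)
    exact hres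
  · -- claim (b)
    intro i hi i' hi' hdivne
    have hilt : i / (u - 2) < s ^ 2 := by
      rw [Nat.div_lt_iff_lt_mul hm, mul_comm]
      exact hi
    have hi'lt : i' / (u - 2) < s ^ 2 := by
      rw [Nat.div_lt_iff_lt_mul hm, mul_comm]
      exact hi'
    have hff : fidx (i / (u - 2)) ≠ fidx (i' / (u - 2)) := by
      intro h
      exact hdivne (hfidx _ hilt _ hi'lt h)
    have hble1 : i % (u - 2) < u - 2 := Nat.mod_lt _ hm
    have hble2 : i' % (u - 2) < u - 2 := Nat.mod_lt _ hm
    constructor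
    · intro a ha b hb
      have hres := P4.count_core hcard rows hrows1 hrows2
        (fun x : Fin u → F => ((fun p : Fin (u - 2) =>
            R (P4.Wf (u-2) (i % (u-2)) p.1) (fidx (i / (u - 2))) x),
          R (i' % (u - 2) + 1) (fidx (i' / (u - 2))) x))
        (by
          intro x y
          simp only [Prod.mk_add_mk, Prod.mk.injEq]
          refine ⟨funext fun p => ?_, ?_⟩
          · rw [Pi.add_apply]
            exact hRadd _ (P4.Wf_ge _ _ _) (P4.Wf_le hm _ _) _ _ _
          · exact hRadd _ (by omega) (by omega) _ _ _)
        (hsurjM5 _ _ hff (i % (u-2)) (i' % (u - 2) + 1) (by omega) (by omega))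
        ((fun p : Fin (u - 2) => psi (a / s ^ p.1 % s)), psi b)
        (fun r => Bmat r i = a ∧ Bmat r i' / s ^ (u - 3) = b)
        (by
          intro r hr
          beta_reduce
          rw [hBiff r hr i hi a ha, hBlead r hr i' hi' b hb]
          simp only [Prod.mk.injEq, funext_iff]
          try tauto)
        (u - 1) 1 hcardm1 (by omega)
      simpa using hres
    · intro a ha b hb
      have hres := P4.count_core hcard rows hrows1 hrows2
        (fun x : Fin u → F => ((fun p : Fin (u - 2) =>
            R (P4.Wf (u-2) (i' % (u-2)) p.1) (fidx (i' / (u - 2))) x),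
          R (i % (u - 2) + 1) (fidx (i / (u - 2))) x))
        (by
          intro x y
          simp only [Prod.mk_add_mk, Prod.mk.injEq]
          refine ⟨funext fun p => ?_, ?_⟩
          · rw [Pi.add_apply]
            exact hRadd _ (P4.Wf_ge _ _ _) (P4.Wf_le hm _ _) _ _ _
          · exact hRadd _ (by omega) (by omega) _ _ _)
        (hsurjM5 _ _ (Ne.symm hff) (i' % (u-2)) (i % (u - 2) + 1) (by omega) (by omega))
        ((fun p : Fin (u - 2) => psi (b / s ^ p.1 % s)), psi a)
        (fun r => Bmat r i / s ^ (u - 3) = a ∧ Bmat r i' = b)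
        (by
          intro r hr
          beta_reduce
          rw [hBlead r hr i hi a ha, hBiff r hr i' hi' b hb]
          simp only [Prod.mk.injEq, funext_iff]
          try tauto)
        (u - 1) 1 hcardm1 (by omega)
      simpa using hres
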